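/- arXiv:1302.3965 — 9 statements merged into one kernel-verified Lean document; each statement's English description precedes it below -/
import Mathlib

section
/- Let X, Y be real Banach spaces and T ∈ B(X,Y) with T ≠ 0. Then T has a bounded homogeneous generalized inverse T^h : Y → X if and only if the range R(T) is closed in Y and there exist a bounded quasi-linear projector P : X → X with R(P) = N(T) and a bounded homogeneous projector Q : Y → Y with R(Q) = R(T). -/
/-!
Given `T^h`, the maps `P = I - T^h T` and `Q = T T^h` are the required projectors, and `T^h`
provides preimages of norm `O(‖y‖)` for every `y ∈ R(T)`, which forces `R(T)` to be closed.

Conversely, quasi-additivity of `P` on `R(P) = N(T)` makes `x ↦ x - P x` constant on the fibres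
of `T`. The open mapping theorem gives a (nonlinear) choice `σ` of preimages of norm `O(‖y‖)`, and
`T^h = (I - P) σ Q` is homogeneous because its value does not depend on the choice made by `σ`.
-/

open Metric Set

variable {X Y : Type*} [NormedAddCommGroup X] [NormedSpace ℝ X]
  [NormedAddCommGroup Y] [NormedSpace ℝ Y]

/-- `F` is a bounded homogeneous operator: `F (c • x) = c • F x` for all real `c`,
and `F` maps bounded sets to bounded sets (equivalently, `‖F x‖ ≤ M * ‖x‖`). -/
def BddHomOp (F : X → Y) : Prop :=
  (∀ (c : ℝ) (x : X), F (c • x) = c • F x) ∧ ∃ M : ℝ, ∀ x, ‖F x‖ ≤ M * ‖x‖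

/-- The norm of a (homogeneous) map: `sup {‖F x‖ : ‖x‖ = 1}`. -/
noncomputable def hnorm (F : X → Y) : ℝ :=
  sSup ((fun x => ‖F x‖) '' {x : X | ‖x‖ = 1})

/-- `F` is quasi-additive on the subset `M`. -/
def QuasiAdditiveOn (F : X → Y) (M : Set X) : Prop :=
  ∀ x : X, ∀ z ∈ M, F (x + z) = F x + F z

/-- `S` is a bounded homogeneous generalized inverse of `T`: `T S T = T` and `S T S = S`. -/
def GenInv (T : X →L[ℝ] Y) (S : Y → X) : Prop :=
  BddHomOp S ∧ (∀ x, T (S (T x)) = T x) ∧ (∀ y, S (T (S y)) = S y)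

/-- A subset `V` is Chebyshev: every point has a unique nearest point in `V`. -/
def IsChebyshev (V : Set X) : Prop :=
  ∀ x : X, ∃! v, v ∈ V ∧ ‖x - v‖ = Metric.infDist x V

/-- `p` is the metric projector onto `V`: `p x ∈ V` is a nearest point to `x` in `V`. -/
def IsMetricProjOn (V : Set X) (p : X → X) : Prop :=
  ∀ x, p x ∈ V ∧ ‖x - p x‖ = Metric.infDist x V

/-- `TH` is a quasi-linear projector generalized inverse of `T`. -/
def QLPGenInv (T : X →L[ℝ] Y) (TH : Y → X) : Prop :=
  BddHomOp TH ∧ (∀ x, T (TH (T x)) = T x) ∧ (∀ y, TH (T (TH y)) = TH y) ∧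
  (∃ P : X →L[ℝ] X, (∀ x, P (P x) = P x) ∧ Set.range ⇑P = {x : X | T x = 0} ∧
    ∀ x, TH (T x) = x - P x) ∧
  (∃ Q : Y → Y, BddHomOp Q ∧ (∀ y, Q (Q y) = Q y) ∧ QuasiAdditiveOn Q (Set.range Q) ∧
    Set.range Q = Set.range ⇑T ∧ ∀ y, T (TH y) = Q y)

section

variable {Z : Type*} [NormedAddCommGroup Z] [NormedSpace ℝ Z]

namespace BddHomOp

variable {F G : X → Y}

lemma map_zero (hF : BddHomOp F) : F 0 = 0 := by
  simpa using hF.1 0 0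

lemma exists_nonneg_bound (hF : BddHomOp F) : ∃ M, 0 ≤ M ∧ ∀ x, ‖F x‖ ≤ M * ‖x‖ := by
  obtain ⟨M, hM⟩ := hF.2
  exact ⟨max M 0, le_max_right _ _, fun x => (hM x).trans (by gcongr; exact le_max_left _ _)⟩

lemma comp {H : Y → Z} (hH : BddHomOp H) (hF : BddHomOp F) : BddHomOp (H ∘ F) := by
  obtain ⟨MH, hMH0, hMH⟩ := hH.exists_nonneg_bound
  obtain ⟨MF, hMF⟩ := hF.2
  refine ⟨fun c x => by simp only [Function.comp_apply, hF.1, hH.1], MH * MF, fun x => ?_⟩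
  calc ‖H (F x)‖ ≤ MH * ‖F x‖ := hMH _
    _ ≤ MH * (MF * ‖x‖) := by gcongr; exact hMF x
    _ = MH * MF * ‖x‖ := by ring

lemma sub (hF : BddHomOp F) (hG : BddHomOp G) : BddHomOp (F - G) := by
  obtain ⟨MF, hMF⟩ := hF.2
  obtain ⟨MG, hMG⟩ := hG.2
  refine ⟨fun c x => by simp only [Pi.sub_apply, hF.1, hG.1, smul_sub], MF + MG, fun x => ?_⟩
  calc ‖F x - G x‖ ≤ ‖F x‖ + ‖G x‖ := norm_sub_le _ _
    _ ≤ MF * ‖x‖ + MG * ‖x‖ := add_le_add (hMF x) (hMG x)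
    _ = (MF + MG) * ‖x‖ := by ring

lemma id : BddHomOp (id : X → X) :=
  ⟨fun _ _ => rfl, 1, fun x => by simp⟩

end BddHomOp

lemma ContinuousLinearMap.bddHomOp (A : X →L[ℝ] Y) : BddHomOp A :=
  ⟨A.map_smul, ‖A‖, A.le_opNorm⟩

end

lemma sub_apply_add_of_mem_range {E : Type*} [NormedAddCommGroup E] {P : E → E}
    (hPP : ∀ x, P (P x) = P x) (hqa : QuasiAdditiveOn P (range P)) (x : E) {z : E}
    (hz : z ∈ range P) : x + z - P (x + z) = x - P x := by
  obtain ⟨w, rfl⟩ := hz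
  rw [hqa x _ ⟨w, rfl⟩, hPP]
  abel

lemma sub_apply_eq_of_map_eq {T : X →L[ℝ] Y} {P : X → X} (hPP : ∀ x, P (P x) = P x)
    (hqa : QuasiAdditiveOn P (range P)) (hPT : range P = {x | T x = 0}) {x x' : X}
    (h : T x = T x') : x - P x = x' - P x' := by
  have hz : x - x' ∈ range P := by
    rw [hPT, mem_ofPred_eq, map_sub, h, sub_self]
  simpa using sub_apply_add_of_mem_range hPP hqa x' hz

namespace ContinuousLinearMap

lemma isClosed_range_of_exists_preimage_norm_le [CompleteSpace X] (T : X →L[ℝ] Y) {C : ℝ}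
    (hC : 0 < C) (h : ∀ x, ∃ x', T x' = T x ∧ ‖x'‖ ≤ C * ‖T x‖) : IsClosed (range T) := by
  let f : NormedAddGroupHom X Y :=
    T.toLinearMap.toAddMonoidHom.mkNormedAddGroupHom ‖T‖ T.le_opNorm
  have hf : f.SurjectiveOnWith f.range C := by
    rintro _ ⟨x, rfl⟩
    exact h x
  refine isClosed_of_closure_subset fun y hy => ?_
  obtain ⟨x, hx, -⟩ := controlled_closure_of_complete hC one_pos hf y (by
    rw [← SetLike.mem_coe, AddSubgroup.topologicalClosure_coe]
    exact hy)
  exact ⟨x, hx⟩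

lemma exists_preimage_norm_le_of_isClosed_range [CompleteSpace X] [CompleteSpace Y]
    (T : X →L[ℝ] Y) (hT : IsClosed (range T)) :
    ∃ C > 0, ∀ y ∈ range T, ∃ x, T x = y ∧ ‖x‖ ≤ C * ‖y‖ := by
  have : CompleteSpace (LinearMap.range (T : X →ₗ[ℝ] Y)) :=
    (LinearMap.coe_range T.toLinearMap ▸ hT).completeSpace_coe
  obtain ⟨C, hC, h⟩ :=
    T.rangeRestrict.exists_preimage_norm_le (by rintro ⟨_, x, rfl⟩; exact ⟨x, rfl⟩)
  refine ⟨C, hC, ?_⟩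
  rintro _ ⟨x, rfl⟩
  obtain ⟨x', hx', hle⟩ := h ⟨T x, x, rfl⟩
  exact ⟨x', congrArg Subtype.val hx', hle⟩

end ContinuousLinearMap

namespace GenInv

variable {T : X →L[ℝ] Y} {Th : Y → X}

lemma isClosed_range [CompleteSpace X] (h : GenInv T Th) : IsClosed (range T) := by
  obtain ⟨M, hM0, hM⟩ := h.1.exists_nonneg_bound
  exact T.isClosed_range_of_exists_preimage_norm_le (by positivity : 0 < M + 1) fun x =>
    ⟨Th (T x), h.2.1 x, (hM _).trans (by nlinarith [norm_nonneg (T x)])⟩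

lemma exists_quasiLinear_projector_onto_ker (h : GenInv T Th) :
    ∃ P : X → X, BddHomOp P ∧ (∀ x, P (P x) = P x) ∧
      QuasiAdditiveOn P (range P) ∧ range P = {x | T x = 0} := by
  have hker : ∀ x, T (x - Th (T x)) = 0 := fun x => by rw [map_sub, h.2.1, sub_self]
  have hfix : ∀ {z}, T z = 0 → z - Th (T z) = z := fun hz => by
    rw [hz, h.1.map_zero, sub_zero]
  refine ⟨fun x => x - Th (T x), BddHomOp.id.sub (h.1.comp T.bddHomOp), fun x => hfix (hker x),
    ?_, ?_⟩
  · rintro x _ ⟨w, rfl⟩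
    beta_reduce
    rw [hfix (hker w), map_add, hker, add_zero]
    abel
  · ext x
    exact ⟨by rintro ⟨w, rfl⟩; exact hker w, fun hx => ⟨x, hfix hx⟩⟩

lemma exists_projector_onto_range (h : GenInv T Th) :
    ∃ Q : Y → Y, BddHomOp Q ∧ (∀ y, Q (Q y) = Q y) ∧ range Q = range T :=
  ⟨T ∘ Th, T.bddHomOp.comp h.1, fun y => congrArg T (h.2.2 y),
    (range_comp_subset_range _ _).antisymm fun _ ⟨x, hx⟩ =>
      ⟨T x, by rw [Function.comp_apply, h.2.1, hx]⟩⟩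

end GenInv

theorem exists_genInv_of_projectors [CompleteSpace X] [CompleteSpace Y] {T : X →L[ℝ] Y}
    (hT : IsClosed (range T)) {P : X → X} (hP : BddHomOp P) (hPP : ∀ x, P (P x) = P x)
    (hqa : QuasiAdditiveOn P (range P)) (hPT : range P = {x | T x = 0}) {Q : Y → Y}
    (hQ : BddHomOp Q) (hQQ : ∀ y, Q (Q y) = Q y) (hQT : range Q = range T) :
    ∃ Th : Y → X, GenInv T Th := by
  obtain ⟨C, hC, hpre⟩ := T.exists_preimage_norm_le_of_isClosed_range hT
  choose σ hσT hσle using fun y => hpre (Q y) (hQT ▸ mem_range_self y)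
  have hTP : ∀ x, T (P x) = 0 := fun x => (hPT ▸ mem_range_self x : P x ∈ {x | T x = 0})
  have hTTh : ∀ y, T (σ y - P (σ y)) = Q y := fun y => by rw [map_sub, hTP, sub_zero, hσT]
  have hfib : ∀ {x x'}, T x = T x' → x - P x = x' - P x' := sub_apply_eq_of_map_eq hPP hqa hPT
  refine ⟨fun y => σ y - P (σ y), ⟨fun c y => ?_, ?_⟩, fun x => ?_, fun y => ?_⟩
  · have : T (σ (c • y)) = T (c • σ y) := by rw [hσT, map_smul, hσT, hQ.1]
    beta_reduce
    rw [hfib this, hP.1, smul_sub]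
  · obtain ⟨M, hM0, hM⟩ := (BddHomOp.id.sub hP).exists_nonneg_bound
    obtain ⟨MQ, -, hMQ⟩ := hQ.exists_nonneg_bound
    refine ⟨M * C * MQ, fun y => ?_⟩
    calc ‖σ y - P (σ y)‖ ≤ M * ‖σ y‖ := hM _
      _ ≤ M * (C * ‖Q y‖) := by gcongr; exact hσle y
      _ ≤ M * (C * (MQ * ‖y‖)) := by gcongr; exact hMQ y
      _ = M * C * MQ * ‖y‖ := by ring
  · obtain ⟨w, hw⟩ : T x ∈ range Q := hQT ▸ mem_range_self x
    rw [hTTh, ← hw, hQQ]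
  · exact hfib (by rw [hσT, hTTh, hQQ, hσT])

theorem stmt_0_general [CompleteSpace X] [CompleteSpace Y] (T : X →L[ℝ] Y) :
    (∃ Th : Y → X, GenInv T Th) ↔
      (IsClosed (Set.range ⇑T) ∧
        (∃ P : X → X, BddHomOp P ∧ (∀ x, P (P x) = P x) ∧
          QuasiAdditiveOn P (Set.range P) ∧ Set.range P = {x : X | T x = 0}) ∧
        (∃ Q : Y → Y, BddHomOp Q ∧ (∀ y, Q (Q y) = Q y) ∧
          Set.range Q = Set.range ⇑T)) := by
  constructor
  · rintro ⟨Th, h⟩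
    exact ⟨h.isClosed_range, h.exists_quasiLinear_projector_onto_ker,
      h.exists_projector_onto_range⟩
  · rintro ⟨hT, ⟨P, hP, hPP, hqa, hPT⟩, ⟨Q, hQ, hQQ, hQT⟩⟩
    exact exists_genInv_of_projectors hT hP hPP hqa hPT hQ hQQ hQT

theorem stmt_0 [CompleteSpace X] [CompleteSpace Y] (T : X →L[ℝ] Y) (hT : T ≠ 0) :
    (∃ Th : Y → X, GenInv T Th) ↔
      (IsClosed (Set.range ⇑T) ∧
        (∃ P : X → X, BddHomOp P ∧ (∀ x, P (P x) = P x) ∧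
          QuasiAdditiveOn P (Set.range P) ∧ Set.range P = {x : X | T x = 0}) ∧
        (∃ Q : Y → Y, BddHomOp Q ∧ (∀ y, Q (Q y) = Q y) ∧
          Set.range Q = Set.range ⇑T)) :=
  stmt_0_general T
end

section
/- Let X, Y be real Banach spaces and T ∈ B(X,Y) with T ≠ 0. If T has a bounded homogeneous generalized inverse T^h : Y → X, then dist(x, N(T)) ≤ ‖T^h‖·‖Tx‖ for every x ∈ X, and consequently the range R(T) is closed in Y. -/
open Metric Set

variable {X Y : Type*} [NormedAddCommGroup X] [NormedSpace ℝ X]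
  [NormedAddCommGroup Y] [NormedSpace ℝ Y]

/-!
Since `T S T = T`, the point `x - S (T x)` lies in `ker T`, at distance `‖S (T x)‖ ≤ ‖S‖ ‖T x‖`
from `x`. This lower bound `dist(x, ker T) ≤ ‖S‖ ‖T x‖` makes the injective map
`X ⧸ ker T → Y` induced by `T` antilipschitz, and an antilipschitz map on the Banach space
`X ⧸ ker T` has closed range.
-/

namespace ContinuousLinearMap

variable {𝕜 E F : Type*} [NontriviallyNormedField 𝕜] [NormedAddCommGroup E] [NormedSpace 𝕜 E]
  [NormedAddCommGroup F] [NormedSpace 𝕜 F]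

noncomputable def kerLift (T : E →L[𝕜] F) : (E ⧸ LinearMap.ker (T : E →ₗ[𝕜] F)) →L[𝕜] F where
  toLinearMap := (LinearMap.ker (T : E →ₗ[𝕜] F)).liftQ T le_rfl
  cont := (LinearMap.ker (T : E →ₗ[𝕜] F)).isQuotientMap_mkQ.continuous_iff.2 T.continuous

theorem range_kerLift (T : E →L[𝕜] F) : range T.kerLift = range T :=
  ((Submodule.Quotient.mk_surjective _).range_comp T.kerLift).symm

theorem isClosed_range_of_infDist_ker_le [CompleteSpace E] (T : E →L[𝕜] F) (C : ℝ)
    (h : ∀ x, infDist x (LinearMap.ker (T : E →ₗ[𝕜] F) : Set E) ≤ C * ‖T x‖) :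
    IsClosed (range T) := by
  have hanti : AntilipschitzWith C.toNNReal T.kerLift := by
    refine T.kerLift.antilipschitz_of_bound fun q ↦ ?_
    obtain ⟨x, rfl⟩ := Submodule.Quotient.mk_surjective _ q
    calc ‖(Submodule.Quotient.mk x : E ⧸ LinearMap.ker (T : E →ₗ[𝕜] F))‖
        = infDist x (LinearMap.ker (T : E →ₗ[𝕜] F) : Set E) := QuotientAddGroup.norm_mk x
      _ ≤ C * ‖T x‖ := h x
      _ ≤ C.toNNReal * ‖T x‖ := by gcongr; exact Real.le_coe_toNNReal C
  rw [← range_kerLift]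
  exact hanti.isClosed_range T.kerLift.uniformContinuous

end ContinuousLinearMap

theorem BddHomOp.map_zero_s1 {F : X → Y} (hF : BddHomOp F) : F 0 = 0 := by
  simpa using hF.1 0 0

theorem BddHomOp.bddAbove_norm_image_sphere {F : X → Y} (hF : BddHomOp F) :
    BddAbove ((fun x => ‖F x‖) '' {x : X | ‖x‖ = 1}) := by
  obtain ⟨M, hM⟩ := hF.2
  refine ⟨M, ?_⟩
  rintro _ ⟨x, hx : ‖x‖ = 1, rfl⟩
  simpa [hx] using hM x

theorem BddHomOp.norm_apply_le_hnorm_mul {F : X → Y} (hF : BddHomOp F) (x : X) :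
    ‖F x‖ ≤ hnorm F * ‖x‖ := by
  rcases eq_or_ne x 0 with rfl | hx
  · simp [hF.map_zero_s1]
  have hx' : ‖x‖ ≠ 0 := norm_ne_zero_iff.2 hx
  have hunit : ‖‖x‖⁻¹ • x‖ = 1 := by
    rw [norm_smul, norm_inv, norm_norm, inv_mul_cancel₀ hx']
  have hrescale : F x = ‖x‖ • F (‖x‖⁻¹ • x) := by
    rw [← hF.1, smul_smul, mul_inv_cancel₀ hx', one_smul]
  calc ‖F x‖ = ‖F (‖x‖⁻¹ • x)‖ * ‖x‖ := by rw [hrescale, norm_smul, norm_norm, mul_comm]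
    _ ≤ hnorm F * ‖x‖ := by
      gcongr
      exact le_csSup hF.bddAbove_norm_image_sphere ⟨_, hunit, rfl⟩

theorem GenInv.infDist_ker_le {T : X →L[ℝ] Y} {S : Y → X} (h : GenInv T S) (x : X) :
    infDist x {z : X | T z = 0} ≤ hnorm S * ‖T x‖ := by
  have hmem : T (x - S (T x)) = 0 := by rw [map_sub, h.2.1 x, sub_self]
  calc infDist x {z : X | T z = 0} ≤ dist x (x - S (T x)) := infDist_le_dist_of_mem hmem
    _ = ‖S (T x)‖ := by rw [dist_eq_norm, sub_sub_cancel]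
    _ ≤ hnorm S * ‖T x‖ := h.1.norm_apply_le_hnorm_mul _

theorem stmt_1_general [CompleteSpace X] (T : X →L[ℝ] Y)
    (Th : Y → X) (h : GenInv T Th) :
    (∀ x : X, Metric.infDist x {z : X | T z = 0} ≤ hnorm Th * ‖T x‖) ∧
      IsClosed (Set.range ⇑T) :=
  ⟨h.infDist_ker_le, T.isClosed_range_of_infDist_ker_le _ h.infDist_ker_le⟩

theorem stmt_1 [CompleteSpace X] [CompleteSpace Y] (T : X →L[ℝ] Y) (hT : T ≠ 0)
    (Th : Y → X) (h : GenInv T Th) :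
    (∀ x : X, Metric.infDist x {z : X | T z = 0} ≤ hnorm Th * ‖T x‖) ∧
      IsClosed (Set.range ⇑T) :=
  stmt_1_general T Th h
end

section
/- Let X, Y be real Banach spaces and T ∈ B(X,Y) with T ≠ 0 and R(T) closed. Assume N(T) is a Chebyshev subspace of X and R(T) is a Chebyshev subspace of Y. Then there exists a bounded homogeneous operator T^h : Y → X such that T T^h T = T, T^h T T^h = T^h, T T^h = π_{R(T)}, and T^h T = I_X − π_{N(T)}. -/
open Metric Set

variable {X Y : Type*} [NormedAddCommGroup X] [NormedSpace ℝ X]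
  [NormedAddCommGroup Y] [NormedSpace ℝ Y]

/-!
The candidate is `T^h y = x - π_N x` for any `x` with `T x = π_R y`. Uniqueness of nearest points
makes a metric projector onto a subspace `V` commute with translations by `V` and with scalings,
so `x - π_N x` does not depend on the choice of `x` and `T^h` is homogeneous. Its norm is the
distance from `x` to `N(T)`, which by the open mapping theorem on the closed range is at most
`C ‖T x‖ = C ‖π_R y‖ ≤ 2 C ‖y‖`.
-/

namespace Submodule

variable {𝕜 E : Type*} [NormedField 𝕜] [SeminormedAddCommGroup E] [NormedSpace 𝕜 E]

theorem norm_mkQ_eq_infDist (p : Submodule 𝕜 E) (x : E) : ‖p.mkQ x‖ = infDist x p :=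
  QuotientAddGroup.norm_mk (S := p.toAddSubgroup) x

theorem infDist_add_of_mem (p : Submodule 𝕜 E) {z : E} (hz : z ∈ p) (x : E) :
    infDist (x + z) p = infDist x p := by
  rw [← p.norm_mkQ_eq_infDist, ← p.norm_mkQ_eq_infDist, map_add,
    (p.mkQ_apply z).trans ((Quotient.mk_eq_zero p).2 hz), add_zero]

theorem infDist_smul (p : Submodule 𝕜 E) (c : 𝕜) (x : E) :
    infDist (c • x) p = ‖c‖ * infDist x p := by
  rw [← p.norm_mkQ_eq_infDist, ← p.norm_mkQ_eq_infDist, map_smul, norm_smul]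

end Submodule

namespace IsMetricProjOn

variable {E : Type*} [NormedAddCommGroup E] {V : Set E} {π : E → E}

theorem apply_of_mem (hπ : IsMetricProjOn V π) {v : E} (hv : v ∈ V) : π v = v := by
  have h := (hπ v).2
  rw [infDist_zero_of_mem hv, norm_sub_rev, norm_eq_zero, sub_eq_zero] at h
  exact h

theorem norm_sub_apply_le (hπ : IsMetricProjOn V π) (h0 : (0 : E) ∈ V) (x : E) :
    ‖x - π x‖ ≤ ‖x‖ := by
  simpa [(hπ x).2] using infDist_le_dist_of_mem (x := x) h0

theorem norm_apply_le (hπ : IsMetricProjOn V π) (h0 : (0 : E) ∈ V) (x : E) : ‖π x‖ ≤ 2 * ‖x‖ :=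
  calc ‖π x‖ = ‖x - (x - π x)‖ := by rw [sub_sub_cancel]
    _ ≤ ‖x‖ + ‖x - π x‖ := norm_sub_le _ _
    _ ≤ 2 * ‖x‖ := by linarith [hπ.norm_sub_apply_le h0 x]

variable [NormedSpace ℝ E] {p : Submodule ℝ E}

theorem map_add_of_mem (hp : IsChebyshev (p : Set E)) (hπ : IsMetricProjOn p π) (x : E)
    {z : E} (hz : z ∈ p) : π (x + z) = π x + z := by
  refine (hp (x + z)).unique (hπ (x + z)) ⟨p.add_mem (hπ x).1 hz, ?_⟩
  rw [add_sub_add_right_eq_sub, (hπ x).2, p.infDist_add_of_mem hz]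

theorem map_smul (hp : IsChebyshev (p : Set E)) (hπ : IsMetricProjOn p π) (c : ℝ) (x : E) :
    π (c • x) = c • π x := by
  refine (hp (c • x)).unique (hπ (c • x)) ⟨p.smul_mem c (hπ x).1, ?_⟩
  rw [← smul_sub, norm_smul, (hπ x).2, p.infDist_smul]

theorem sub_apply_eq_of_sub_mem (hp : IsChebyshev (p : Set E)) (hπ : IsMetricProjOn p π)
    {x x' : E} (h : x' - x ∈ p) : x - π x = x' - π x' := by
  rw [← add_sub_cancel x x', hπ.map_add_of_mem hp x h, add_sub_add_right_eq_sub]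

end IsMetricProjOn

theorem ContinuousLinearMap.exists_infDist_ker_le {𝕜 E F : Type*} [NontriviallyNormedField 𝕜]
    [NormedAddCommGroup E] [NormedSpace 𝕜 E] [NormedAddCommGroup F] [NormedSpace 𝕜 F]
    [CompleteSpace E] [CompleteSpace F] (T : E →L[𝕜] F) (hT : IsClosed (range T)) :
    ∃ C > 0, ∀ x, infDist x T.ker ≤ C * ‖T x‖ := by
  have : CompleteSpace T.range := hT.completeSpace_coe
  obtain ⟨C, hC, hpre⟩ := T.rangeRestrict.exists_preimage_norm_le T.surjective_rangeRestrict
  refine ⟨C, hC, fun x => ?_⟩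
  obtain ⟨x', hx', hnorm⟩ := hpre (T.rangeRestrict x)
  have hker : x - x' ∈ T.ker := by
    rw [LinearMap.mem_ker, map_sub, sub_eq_zero]
    exact (congrArg Subtype.val hx').symm
  calc infDist x T.ker ≤ dist x (x - x') := infDist_le_dist_of_mem hker
    _ = ‖x'‖ := by rw [dist_eq_norm, sub_sub_cancel]
    _ ≤ C * ‖T x‖ := hnorm

noncomputable def metricGenInv (T : X →L[ℝ] Y) (πN : X → X) (πR : Y → Y) (y : Y) : X :=
  Function.invFun T (πR y) - πN (Function.invFun T (πR y))

section metricGenInv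

variable {T : X →L[ℝ] Y} {πN : X → X} {πR : Y → Y}

theorem metricGenInv_eq (hN : IsChebyshev {x : X | T x = 0})
    (hπN : IsMetricProjOn {x : X | T x = 0} πN) {x : X} {y : Y} (hx : T x = πR y) :
    metricGenInv T πN πR y = x - πN x := by
  have hinv : T (Function.invFun T (πR y)) = πR y := Function.invFun_eq ⟨x, hx⟩
  refine hπN.sub_apply_eq_of_sub_mem (p := T.ker) hN ?_
  change T (x - _) = 0
  rw [map_sub, hx, hinv, sub_self]

theorem apply_metricGenInv (hπN : IsMetricProjOn {x : X | T x = 0} πN)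
    (hπR : IsMetricProjOn (range T) πR) (y : Y) : T (metricGenInv T πN πR y) = πR y := by
  have hπN_ker : T (πN (Function.invFun T (πR y))) = 0 := (hπN _).1
  rw [metricGenInv, map_sub, hπN_ker, sub_zero, Function.invFun_eq (hπR y).1]

theorem metricGenInv_apply (hN : IsChebyshev {x : X | T x = 0})
    (hπN : IsMetricProjOn {x : X | T x = 0} πN) (hπR : IsMetricProjOn (range T) πR) (x : X) :
    metricGenInv T πN πR (T x) = x - πN x :=
  metricGenInv_eq hN hπN (hπR.apply_of_mem (mem_range_self x)).symm

theorem metricGenInv_apply_metricGenInv (hN : IsChebyshev {x : X | T x = 0})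
    (hπN : IsMetricProjOn {x : X | T x = 0} πN) (hπR : IsMetricProjOn (range T) πR) (y : Y) :
    metricGenInv T πN πR (T (metricGenInv T πN πR y)) = metricGenInv T πN πR y := by
  rw [apply_metricGenInv hπN hπR]
  exact metricGenInv_eq hN hπN ((Function.invFun_eq (hπR y).1).trans
    (hπR.apply_of_mem (hπR y).1).symm)

theorem metricGenInv_smul (hN : IsChebyshev {x : X | T x = 0})
    (hπN : IsMetricProjOn {x : X | T x = 0} πN) (hR : IsChebyshev (range T))
    (hπR : IsMetricProjOn (range T) πR) (c : ℝ) (y : Y) :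
    metricGenInv T πN πR (c • y) = c • metricGenInv T πN πR y := by
  obtain ⟨x, hx⟩ := (hπR y).1
  have hcx : T (c • x) = πR (c • y) := by rw [map_smul, hx, hπR.map_smul (p := T.range) hR]
  rw [metricGenInv_eq hN hπN hx, metricGenInv_eq hN hπN hcx, hπN.map_smul (p := T.ker) hN,
    smul_sub]

theorem exists_norm_metricGenInv_le [CompleteSpace X] [CompleteSpace Y]
    (hcl : IsClosed (range T)) (hN : IsChebyshev {x : X | T x = 0})
    (hπN : IsMetricProjOn {x : X | T x = 0} πN) (hπR : IsMetricProjOn (range T) πR) :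
    ∃ M : ℝ, ∀ y, ‖metricGenInv T πN πR y‖ ≤ M * ‖y‖ := by
  obtain ⟨C, hC, hdist⟩ := T.exists_infDist_ker_le hcl
  refine ⟨C * 2, fun y => ?_⟩
  obtain ⟨x, hx⟩ := (hπR y).1
  calc ‖metricGenInv T πN πR y‖ = infDist x T.ker := by
        rw [metricGenInv_eq hN hπN hx, (hπN x).2]; rfl
    _ ≤ C * ‖πR y‖ := hx ▸ hdist x
    _ ≤ C * (2 * ‖y‖) := by gcongr; exact hπR.norm_apply_le ⟨0, map_zero T⟩ y
    _ = C * 2 * ‖y‖ := by ring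

end metricGenInv

theorem stmt_2_general [CompleteSpace X] [CompleteSpace Y] (T : X →L[ℝ] Y)
    (hcl : IsClosed (Set.range ⇑T))
    (hN : IsChebyshev {x : X | T x = 0}) (hR : IsChebyshev (Set.range ⇑T))
    (πN : X → X) (hπN : IsMetricProjOn {x : X | T x = 0} πN)
    (πR : Y → Y) (hπR : IsMetricProjOn (Set.range ⇑T) πR) :
    ∃ Th : Y → X, BddHomOp Th ∧ (∀ x, T (Th (T x)) = T x) ∧ (∀ y, Th (T (Th y)) = Th y) ∧
      (∀ y, T (Th y) = πR y) ∧ (∀ x, Th (T x) = x - πN x) := by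
  refine ⟨metricGenInv T πN πR,
    ⟨metricGenInv_smul hN hπN hR hπR, exists_norm_metricGenInv_le hcl hN hπN hπR⟩,
    fun x => ?_, metricGenInv_apply_metricGenInv hN hπN hπR, apply_metricGenInv hπN hπR,
    metricGenInv_apply hN hπN hπR⟩
  rw [apply_metricGenInv hπN hπR, hπR.apply_of_mem (mem_range_self x)]

theorem stmt_2 [CompleteSpace X] [CompleteSpace Y] (T : X →L[ℝ] Y) (hT : T ≠ 0)
    (hcl : IsClosed (Set.range ⇑T))
    (hN : IsChebyshev {x : X | T x = 0}) (hR : IsChebyshev (Set.range ⇑T))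
    (πN : X → X) (hπN : IsMetricProjOn {x : X | T x = 0} πN)
    (πR : Y → Y) (hπR : IsMetricProjOn (Set.range ⇑T) πR) :
    ∃ Th : Y → X, BddHomOp Th ∧ (∀ x, T (Th (T x)) = T x) ∧ (∀ y, Th (T (Th y)) = Th y) ∧
      (∀ y, T (Th y) = πR y) ∧ (∀ x, Th (T x) = x - πN x) :=
  stmt_2_general T hcl hN hR πN hπN πR hπR
end

section
/- Let X, Y be real Banach spaces and T ∈ B(X,Y) with T ≠ 0. Assume T has a bounded homogeneous generalized inverse T^h : Y → X, and that N(T) is a Chebyshev subspace of X and R(T) is a Chebyshev subspace of Y. Then any map S : Y → X satisfying T S T = T, S T S = S, T S = π_{R(T)}, and S T = I_X − π_{N(T)} is equal to the map (I_X − π_{N(T)}) ∘ T^h ∘ π_{R(T)}; in particular the Moore–Penrose metric generalized inverse of T is T^M = (I_X − π_{N(T)}) T^h π_{R(T)}. -/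
open Metric Set

variable {X Y : Type*} [NormedAddCommGroup X] [NormedSpace ℝ X]
  [NormedAddCommGroup Y] [NormedSpace ℝ Y]

theorem GenInv.apply_apply_of_mem_range {T : X →L[ℝ] Y} {Th : Y → X} (hTh : GenInv T Th)
    {y : Y} (hy : y ∈ range T) : T (Th y) = y := by
  obtain ⟨x, rfl⟩ := hy
  exact hTh.2.1 x

theorem stmt_3_general (T : X →L[ℝ] Y)
    (Th : Y → X) (hTh : GenInv T Th)
    (πN : X → X)
    (πR : Y → Y) (hπR : IsMetricProjOn (Set.range ⇑T) πR)
    (S : Y → X)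
    (hS2 : ∀ y, S (T (S y)) = S y)
    (hS3 : ∀ y, T (S y) = πR y) (hS4 : ∀ x, S (T x) = x - πN x) :
    S = fun y => Th (πR y) - πN (Th (πR y)) := by
  funext y
  have hTπ : T (Th (πR y)) = πR y := hTh.apply_apply_of_mem_range (hπR y).1
  calc S y = S (T (S y)) := (hS2 y).symm
    _ = S (T (Th (πR y))) := by rw [hS3, hTπ]
    _ = Th (πR y) - πN (Th (πR y)) := hS4 _

theorem stmt_3 [CompleteSpace X] [CompleteSpace Y] (T : X →L[ℝ] Y) (hT : T ≠ 0)
    (Th : Y → X) (hTh : GenInv T Th)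
    (hN : IsChebyshev {x : X | T x = 0}) (hR : IsChebyshev (Set.range ⇑T))
    (πN : X → X) (hπN : IsMetricProjOn {x : X | T x = 0} πN)
    (πR : Y → Y) (hπR : IsMetricProjOn (Set.range ⇑T) πR)
    (S : Y → X)
    (hS1 : ∀ x, T (S (T x)) = T x) (hS2 : ∀ y, S (T (S y)) = S y)
    (hS3 : ∀ y, T (S y) = πR y) (hS4 : ∀ x, S (T x) = x - πN x) :
    S = fun y => Th (πR y) - πN (Th (πR y)) :=
  stmt_3_general T Th hTh πN πR hπR S hS2 hS3 hS4
end

section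
/- Let X, Y be real Banach spaces, T ∈ B(X,Y) with a bounded homogeneous generalized inverse T^h : Y → X, and let δT ∈ B(X,Y) be such that T^h is quasi-additive on R(δT) and I_X + T^h∘δT is invertible in B(X,X). Put T̄ = T + δT. If R(T̄) ∩ N(T^h) = {0}, then N(T̄) = (I_X + T^h δT)^{-1}(N(T)), i.e. the kernel of T̄ is the image of N(T) under the inverse of I_X + T^h δT. -/
open Metric Set

variable {X Y : Type*} [NormedAddCommGroup X] [NormedSpace ℝ X]
  [NormedAddCommGroup Y] [NormedSpace ℝ Y]

/-! If `(T + δT) x = 0` then `δT x = -T x`, so `T (x + Th (δT x)) = T x - T (Th (T x)) = 0`.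
Conversely, if `T (x + Th (δT x)) = 0`, quasi-additivity of `Th` on `R(δT)` and `Th T Th = Th`
give `Th ((T + δT) x) = -Th (T (Th (δT x))) + Th (δT x) = 0`, and `R(T + δT) ∩ N(Th) = {0}`
forces `(T + δT) x = 0`. -/

theorem BddHomOp.map_neg {F : X → Y} (hF : BddHomOp F) (x : X) : F (-x) = -F x := by
  simpa using hF.1 (-1) x

namespace GenInv

variable {T δT : X →L[ℝ] Y} {Th : Y → X}

theorem apply_add_genInv_perturbation_eq_zero (hTh : GenInv T Th) {x : X}
    (hx : (T + δT) x = 0) : T (x + Th (δT x)) = 0 := by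
  have hδ : δT x = -T x := eq_neg_of_add_eq_zero_right hx
  rw [map_add, hδ, hTh.1.map_neg, map_neg, hTh.2.1, add_neg_cancel]

theorem genInv_apply_perturbed_eq_zero (hTh : GenInv T Th) (hq : QuasiAdditiveOn Th (range δT))
    {x : X} (hx : T (x + Th (δT x)) = 0) : Th ((T + δT) x) = 0 := by
  have hTx : T x = -T (Th (δT x)) := by
    rw [map_add] at hx
    exact eq_neg_of_add_eq_zero_left hx
  rw [add_apply, hTx, hq _ _ (mem_range_self x), hTh.1.map_neg,
    hTh.2.2, neg_add_cancel]

end GenInv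

theorem stmt_6_general (T δT : X →L[ℝ] Y)
    (Th : Y → X) (hTh : GenInv T Th)
    (hq : QuasiAdditiveOn Th (Set.range ⇑δT))
    (A : (X →L[ℝ] X)ˣ) (hA : ∀ x, (A : X →L[ℝ] X) x = x + Th (δT x))
    (hstab : Set.range ⇑(T + δT) ∩ {y : Y | Th y = 0} = {0}) :
    {x : X | (T + δT) x = 0} = (↑A⁻¹ : X →L[ℝ] X) '' {x : X | T x = 0} := by
  rw [image_eq_preimage_of_inverse (f := ⇑(↑A⁻¹ : X →L[ℝ] X)) (g := ⇑(A : X →L[ℝ] X))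
    (fun x => DFunLike.congr_fun A.mul_inv x) (fun x => DFunLike.congr_fun A.inv_mul x)]
  ext x
  simp only [mem_ofPred_eq, mem_preimage, hA]
  refine ⟨hTh.apply_add_genInv_perturbation_eq_zero, fun hx => ?_⟩
  have hmem : (T + δT) x ∈ range ⇑(T + δT) ∩ {y : Y | Th y = 0} :=
    ⟨mem_range_self x, hTh.genInv_apply_perturbed_eq_zero hq hx⟩
  rwa [hstab] at hmem

theorem stmt_6 [CompleteSpace X] [CompleteSpace Y] (T δT : X →L[ℝ] Y)
    (Th : Y → X) (hTh : GenInv T Th)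
    (hq : QuasiAdditiveOn Th (Set.range ⇑δT))
    (A : (X →L[ℝ] X)ˣ) (hA : ∀ x, (A : X →L[ℝ] X) x = x + Th (δT x))
    (hstab : Set.range ⇑(T + δT) ∩ {y : Y | Th y = 0} = {0}) :
    {x : X | (T + δT) x = 0} = (↑A⁻¹ : X →L[ℝ] X) '' {x : X | T x = 0} :=
  stmt_6_general T δT Th hTh hq A hA hstab
end

section
/- Let X, Y be real Banach spaces, T ∈ B(X,Y) with a bounded homogeneous generalized inverse T^h : Y → X, and let δT ∈ B(X,Y) be such that T^h is quasi-additive on R(δT) and ‖T^h δT‖ < 1 (so that I_X + T^h δT is invertible in B(X,X)). Put T̄ = T + δT. If N(T) ⊆ N(δT), then T̄ has a bounded homogeneous generalized inverse given by T̄^h = T^h ∘ (I_Y + δT T^h)^{-1} = (I_X + T^h δT)^{-1} ∘ T^h. -/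
/-! The Neumann series gives `C = (I + Th δT)⁻¹`, and `Ψ y = y - δT (C (Th y))` inverts
`I + δT Th`: quasi-additivity of `Th` on `R(δT)` turns `Th (Ψ y)` into `C (Th y)`.
The kernel inclusion gives `δT Th T = δT`, so `Th Ψ (T + δT) = C (Th T + Th δT Th T) = Th T`,
from which both identities for `Th ∘ Ψ` reduce to those of `Th`. -/

open Metric Set

variable {X Y : Type*} [NormedAddCommGroup X] [NormedSpace ℝ X]
  [NormedAddCommGroup Y] [NormedSpace ℝ Y]

theorem ContinuousLinearMap.exists_inverse_one_add [CompleteSpace X] (A : X →L[ℝ] X)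
    (hA : ‖A‖ < 1) :
    ∃ C : X →L[ℝ] X, (∀ x, C x + A (C x) = x) ∧ ∀ x, C (x + A x) = x := by
  let u := Units.oneSub (-A) (by rwa [norm_neg])
  refine ⟨↑u⁻¹, fun x => ?_, fun x => ?_⟩
  · simpa [u, add_comm] using congr($(u.mul_inv) x)
  · simpa [u, add_comm] using congr($(u.inv_mul) x)

theorem BddHomOp.clm_comp {Z : Type*} [NormedAddCommGroup Z] [NormedSpace ℝ Z] {F : X → Y}
    (hF : BddHomOp F) (L : Y →L[ℝ] Z) : BddHomOp (fun x => L (F x)) := by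
  obtain ⟨hhom, M, hM⟩ := hF
  refine ⟨fun c x => show L (F (c • x)) = c • L (F x) by rw [hhom, map_smul],
    ‖L‖ * M, fun x => ?_⟩
  calc ‖L (F x)‖ ≤ ‖L‖ * ‖F x‖ := L.le_opNorm _
    _ ≤ ‖L‖ * (M * ‖x‖) := by gcongr; exact hM x
    _ = ‖L‖ * M * ‖x‖ := by ring

theorem apply_genInv_apply_of_ker_le {T δT : X →L[ℝ] Y} {Th : Y → X}
    (hTh : ∀ x, T (Th (T x)) = T x) (hker : {x : X | T x = 0} ⊆ {x : X | δT x = 0}) (x : X) :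
    δT (Th (T x)) = δT x :=
  sub_eq_zero.mp <| by
    rw [← map_sub]
    exact hker (show T (Th (T x) - x) = 0 by rw [map_sub, hTh, sub_self])

namespace GenInv

variable (δT : X →L[ℝ] Y) (Th : Y → X) (C : X →L[ℝ] X)

/-- The candidate for `(I + δT Th)⁻¹`, written through `C = (I + Th δT)⁻¹`. -/
def perturbFactor (y : Y) : Y :=
  y - δT (C (Th y))

variable {δT Th C} {A : X →L[ℝ] X} (hq : QuasiAdditiveOn Th (Set.range ⇑δT))
  (hA : ∀ x, A x = Th (δT x))
include hq hA

theorem apply_perturbFactor (hC : ∀ x, C x + A (C x) = x) (y : Y) :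
    Th (perturbFactor δT Th C y) = C (Th y) := by
  have h := hC (Th y)
  rw [perturbFactor, sub_eq_add_neg, ← map_neg, hq _ _ (mem_range_self _), ← hA, map_neg]
  exact (eq_add_neg_of_add_eq h).symm

theorem perturbFactor_rightInv (hC : ∀ x, C x + A (C x) = x) (y : Y) :
    perturbFactor δT Th C y + δT (Th (perturbFactor δT Th C y)) = y := by
  rw [apply_perturbFactor hq hA hC, perturbFactor, sub_add_cancel]

theorem perturbFactor_leftInv (hC : ∀ x, C (x + A x) = x) (y : Y) :
    perturbFactor δT Th C (y + δT (Th y)) = y := by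
  rw [perturbFactor, hq _ _ (mem_range_self _), ← hA, hC, add_sub_cancel_right]

theorem oneAdd_apply_perturbFactor (hC : ∀ x, C x + A (C x) = x) (y : Y) :
    Th (perturbFactor δT Th C y) + A (Th (perturbFactor δT Th C y)) = Th y := by
  rw [apply_perturbFactor hq hA hC, hC]

theorem apply_perturbFactor_perturbed_apply {T : X →L[ℝ] Y} (hTh : ∀ x, T (Th (T x)) = T x)
    (hker : {x : X | T x = 0} ⊆ {x : X | δT x = 0}) (hC₁ : ∀ x, C x + A (C x) = x)
    (hC₂ : ∀ x, C (x + A x) = x) (x : X) :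
    Th (perturbFactor δT Th C ((T + δT) x)) = Th (T x) := by
  have hA' : A (Th (T x)) = A x := by
    rw [hA, hA, apply_genInv_apply_of_ker_le hTh hker]
  rw [apply_perturbFactor hq hA hC₁, add_apply, hq _ _ (mem_range_self _), ← hA, ← hA', hC₂]

theorem perturb {T : X →L[ℝ] Y} (hTh : GenInv T Th)
    (hker : {x : X | T x = 0} ⊆ {x : X | δT x = 0}) (hC₁ : ∀ x, C x + A (C x) = x)
    (hC₂ : ∀ x, C (x + A x) = x) :
    GenInv (T + δT) (fun y => Th (perturbFactor δT Th C y)) := by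
  obtain ⟨hbdd, hTTh, hThT⟩ := hTh
  have key := apply_perturbFactor_perturbed_apply hq hA hTTh hker hC₁ hC₂
  refine ⟨?_, fun x => ?_, fun y => ?_⟩
  · simpa only [apply_perturbFactor hq hA hC₁] using hbdd.clm_comp C
  · dsimp only
    rw [key, add_apply, add_apply, hTTh, apply_genInv_apply_of_ker_le hTTh hker]
  · dsimp only
    rw [key, hThT]

end GenInv

theorem stmt_9_general [CompleteSpace X] (T δT : X →L[ℝ] Y)
    (Th : Y → X) (hTh : GenInv T Th)
    (hq : QuasiAdditiveOn Th (Set.range ⇑δT))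
    (A : X →L[ℝ] X) (hA : ∀ x, A x = Th (δT x)) (hAn : ‖A‖ < 1)
    (hker : {x : X | T x = 0} ⊆ {x : X | δT x = 0}) :
    ∃ Ψ : Y → Y, (∀ y, Ψ y + δT (Th (Ψ y)) = y) ∧ (∀ y, Ψ (y + δT (Th y)) = y) ∧
      GenInv (T + δT) (fun y => Th (Ψ y)) ∧
      (∀ y, Th (Ψ y) + A (Th (Ψ y)) = Th y) := by
  obtain ⟨C, hC₁, hC₂⟩ := A.exists_inverse_one_add hAn
  exact ⟨GenInv.perturbFactor δT Th C, GenInv.perturbFactor_rightInv hq hA hC₁,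
    GenInv.perturbFactor_leftInv hq hA hC₂, GenInv.perturb hq hA hTh hker hC₁ hC₂,
    GenInv.oneAdd_apply_perturbFactor hq hA hC₁⟩

theorem stmt_9 [CompleteSpace X] [CompleteSpace Y] (T δT : X →L[ℝ] Y)
    (Th : Y → X) (hTh : GenInv T Th)
    (hq : QuasiAdditiveOn Th (Set.range ⇑δT))
    (A : X →L[ℝ] X) (hA : ∀ x, A x = Th (δT x)) (hAn : ‖A‖ < 1)
    (hker : {x : X | T x = 0} ⊆ {x : X | δT x = 0}) :
    ∃ Ψ : Y → Y, (∀ y, Ψ y + δT (Th (Ψ y)) = y) ∧ (∀ y, Ψ (y + δT (Th y)) = y) ∧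
      GenInv (T + δT) (fun y => Th (Ψ y)) ∧
      (∀ y, Th (Ψ y) + A (Th (Ψ y)) = Th y) :=
  stmt_9_general T δT Th hTh hq A hA hAn hker
end

section
/- Let X, Y be real Banach spaces, T ∈ B(X,Y) with a quasi-linear projector generalized inverse T^H : Y → X, and let δT ∈ B(X,Y) be such that T^H is quasi-additive on R(δT). Put T̄ = T + δT. Assume X = N(T̄) + R(T^H) with N(T̄) ∩ R(T^H) = {0}, and Y = R(T̄) + N(T^H) with R(T̄) ∩ N(T^H) = {0}. Then I_X + T^H∘δT is a bijective bounded linear operator on X. -/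
open Metric Set

variable {X Y : Type*} [NormedAddCommGroup X] [NormedSpace ℝ X]
  [NormedAddCommGroup Y] [NormedSpace ℝ Y]

/-!
Since `TH T = I - P` and `TH` is additive across `R(δT)`, the operator `I + TH δT` equals
`x ↦ P x + TH (T̄ x)`. Applying `P` (which kills `R(TH)`) to `P x + TH (T̄ x) = 0` splits it into
`P x = 0` and `TH (T̄ x) = 0`; the decomposition of `Y` then gives `T̄ x = 0`, and `P x = 0` puts
`x = TH (T x)` in `R(TH)`, so the decomposition of `X` gives `x = 0`. Conversely, to reach `w`
one decomposes `T w` along `R(T̄) + N(TH)` and `P w` along `N(T̄) + R(TH)`.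
-/

open scoped Pointwise

variable {Z : Type*} [NormedAddCommGroup Z] [NormedSpace ℝ Z]

namespace QuasiAdditiveOn

variable {E F : Type*} [NormedAddCommGroup E] [NormedAddCommGroup F] {f : E → F} {M N : Set E}

theorem mono (hf : QuasiAdditiveOn f N) (hMN : M ⊆ N) : QuasiAdditiveOn f M :=
  fun x z hz => hf x z (hMN hz)

theorem add (hM : QuasiAdditiveOn f M) (hN : QuasiAdditiveOn f N) :
    QuasiAdditiveOn f (M + N) := by
  rintro x _ ⟨m, hm, n, hn, rfl⟩
  rw [← add_assoc, hN _ n hn, hM x m hm, hN m n hn, add_assoc]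

theorem range_add [NormedSpace ℝ E] {S S' : Z →L[ℝ] E} (hS : QuasiAdditiveOn f (range S))
    (hS' : QuasiAdditiveOn f (range S')) : QuasiAdditiveOn f (range (S + S')) :=
  (hS.add hS').mono <| by
    rintro _ ⟨x, rfl⟩
    exact Set.add_mem_add ⟨x, rfl⟩ ⟨x, rfl⟩

end QuasiAdditiveOn

noncomputable def BddHomOp.compCLM {F : Y → X} (hF : BddHomOp F) (S : Z →L[ℝ] Y)
    (hS : QuasiAdditiveOn F (range S)) : Z →L[ℝ] X :=
  LinearMap.mkContinuousOfExistsBound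
    { toFun := fun z => F (S z)
      map_add' := fun z z' => by rw [map_add, hS _ _ ⟨z', rfl⟩]
      map_smul' := fun c z => by rw [map_smul, hF.1]; rfl } <| by
    obtain ⟨M, hM⟩ := hF.2
    refine ⟨|M| * ‖S‖, fun z => ?_⟩
    calc ‖F (S z)‖ ≤ M * ‖S z‖ := hM _
      _ ≤ |M| * (‖S‖ * ‖z‖) := by gcongr; exacts [le_abs_self M, S.le_opNorm z]
      _ = |M| * ‖S‖ * ‖z‖ := by ring

theorem proj_apply_eq_zero {T : X →L[ℝ] Y} {TH : Y → X} {P : X →L[ℝ] X}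
    (hTHTH : ∀ y, TH (T (TH y)) = TH y) (hP : ∀ x, TH (T x) = x - P x) (y : Y) :
    P (TH y) = 0 := by
  simpa [hTHTH] using (hP (TH y)).symm

namespace QLPGenInv

variable {T : X →L[ℝ] Y} {TH : Y → X}

theorem quasiAdditiveOn_range (hTH : QLPGenInv T TH) : QuasiAdditiveOn TH (range T) := by
  obtain ⟨-, hTHT, hTHTH, ⟨P, hPP, hPrange, hP⟩, ⟨Q, -, -, hQadd, hQrange, hTTH⟩⟩ := hTH
  rintro y _ ⟨x, rfl⟩
  set s := TH (y + T x) - TH y - TH (T x)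
  have hTs : T s = 0 := by
    have hQ : Q (y + T x) = Q y + Q (T x) := hQadd y (T x) (hQrange ▸ ⟨x, rfl⟩)
    rw [map_sub, map_sub, hTHT, hTTH, hTTH y, hQ, ← hTTH (T x), hTHT]
    abel
  have hPs : P s = 0 := by
    simp only [s, map_sub, proj_apply_eq_zero hTHTH hP, sub_self]
  obtain ⟨t, ht⟩ : s ∈ range P := hPrange ▸ hTs
  have hs : s = 0 := by rw [← hPs, ← ht, hPP]
  rw [← sub_eq_zero, ← sub_sub]
  exact hs

end QLPGenInv

section Perturbation

variable {T S : X →L[ℝ] Y} {TH : Y → X} {P : X →L[ℝ] X}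

theorem eq_zero_of_proj_add_eq_zero (hPP : ∀ x, P (P x) = P x) (hPTH : ∀ y, P (TH y) = 0)
    (hP : ∀ x, TH (T x) = x - P x)
    (hX : {z : X | S z = 0} ∩ range TH = {0}) (hY : range S ∩ {w : Y | TH w = 0} = {0})
    {x : X} (hx : P x + TH (S x) = 0) : x = 0 := by
  have hPx : P x = 0 := by simpa [hPP, hPTH] using congrArg P hx
  rw [hPx, zero_add] at hx
  have hSx : S x = 0 := hY.subset ⟨⟨x, rfl⟩, hx⟩
  have hxTH : x ∈ range TH := ⟨T x, by rw [hP, hPx, sub_zero]⟩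
  exact hX.subset ⟨hSx, hxTH⟩

theorem exists_proj_add_eq (hPP : ∀ x, P (P x) = P x) (hPTH : ∀ y, P (TH y) = 0)
    (hP : ∀ x, TH (T x) = x - P x) (hS : QuasiAdditiveOn TH (range S))
    (hX : ∀ x : X, ∃ u ∈ {z : X | S z = 0}, ∃ v ∈ range TH, x = u + v)
    (hY : ∀ y : Y, ∃ u ∈ range S, ∃ v ∈ {w : Y | TH w = 0}, y = u + v) (w : X) :
    ∃ x, P x + TH (S x) = w := by
  obtain ⟨_, ⟨x₀, rfl⟩, v, hv : TH v = 0, hTw⟩ := hY (T w)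
  obtain ⟨n₀, hn₀ : S n₀ = 0, _, ⟨y₀, rfl⟩, rfl⟩ := hX x₀
  obtain ⟨n, hn : S n = 0, _, ⟨y, rfl⟩, hPw⟩ := hX (P w)
  have hPn : P n = P w := by simpa [hPTH, hPP] using (congrArg P hPw).symm
  have hTHTw : TH (T w) = TH (S (n₀ + TH y₀)) := by
    rw [hTw, add_comm, hS _ _ ⟨_, rfl⟩, hv, zero_add]
  refine ⟨n + TH y₀, ?_⟩
  calc P (n + TH y₀) + TH (S (n + TH y₀)) = P w + TH (S (n₀ + TH y₀)) := by
        simp only [map_add, hn, hn₀, hPn, hPTH, add_zero, zero_add]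
    _ = w := by rw [← hTHTw, hP, add_sub_cancel]

end Perturbation

theorem stmt_13_general (T δT : X →L[ℝ] Y)
    (TH : Y → X) (hTH : QLPGenInv T TH)
    (hq : QuasiAdditiveOn TH (Set.range ⇑δT))
    (hX1 : ∀ x : X, ∃ u ∈ {z : X | (T + δT) z = 0}, ∃ v ∈ Set.range TH, x = u + v)
    (hX2 : {z : X | (T + δT) z = 0} ∩ Set.range TH = {0})
    (hY1 : ∀ y : Y, ∃ u ∈ Set.range ⇑(T + δT), ∃ v ∈ {w : Y | TH w = 0}, y = u + v)
    (hY2 : Set.range ⇑(T + δT) ∩ {w : Y | TH w = 0} = {0}) :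
    ∃ A : X →L[ℝ] X, (∀ x, A x = x + TH (δT x)) ∧ Function.Bijective ⇑A := by
  have hqT := hTH.quasiAdditiveOn_range
  obtain ⟨hbdd, -, hTHTH, ⟨P, hPP, -, hP⟩, -⟩ := hTH
  have hPTH := proj_apply_eq_zero hTHTH hP
  have key : ∀ x, x + TH (δT x) = P x + TH ((T + δT) x) := fun x => by
    rw [add_apply, hq _ _ ⟨x, rfl⟩, hP]
    abel
  refine ⟨1 + hbdd.compCLM δT hq, fun x => rfl, ?_, fun w => ?_⟩
  · refine (injective_iff_map_eq_zero _).2 fun x hx => ?_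
    exact eq_zero_of_proj_add_eq_zero hPP hPTH hP hX2 hY2 ((key x).symm.trans hx)
  · obtain ⟨x, hx⟩ := exists_proj_add_eq hPP hPTH hP (hqT.range_add hq) hX1 hY1 w
    exact ⟨x, (key x).trans hx⟩

theorem stmt_13 [CompleteSpace X] [CompleteSpace Y] (T δT : X →L[ℝ] Y)
    (TH : Y → X) (hTH : QLPGenInv T TH)
    (hq : QuasiAdditiveOn TH (Set.range ⇑δT))
    (hX1 : ∀ x : X, ∃ u ∈ {z : X | (T + δT) z = 0}, ∃ v ∈ Set.range TH, x = u + v)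
    (hX2 : {z : X | (T + δT) z = 0} ∩ Set.range TH = {0})
    (hY1 : ∀ y : Y, ∃ u ∈ Set.range ⇑(T + δT), ∃ v ∈ {w : Y | TH w = 0}, y = u + v)
    (hY2 : Set.range ⇑(T + δT) ∩ {w : Y | TH w = 0} = {0}) :
    ∃ A : X →L[ℝ] X, (∀ x, A x = x + TH (δT x)) ∧ Function.Bijective ⇑A :=
  stmt_13_general T δT TH hTH hq hX1 hX2 hY1 hY2
end

section
/- Let X be a real Banach space and A ∈ B(X,X). Suppose there exist constants λ₁, λ₂ ∈ [0,1) such that ‖Ax‖ ≤ λ₁‖x‖ + λ₂‖(I + A)x‖ for all x ∈ X. Then I + A : X → X is bijective, and for all x ∈ X: ((1−λ₁)/(1+λ₂))‖x‖ ≤ ‖(I+A)x‖ ≤ ((1+λ₁)/(1−λ₂))‖x‖ and ((1−λ₂)/(1+λ₁))‖x‖ ≤ ‖(I+A)^{-1}x‖ ≤ ((1+λ₂)/(1−λ₁))‖x‖. -/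
open Metric Set

variable {X Y : Type*} [NormedAddCommGroup X] [NormedSpace ℝ X]
  [NormedAddCommGroup Y] [NormedSpace ℝ Y]

/-!
The hypothesis passes from `A` to `t • A` for every `t ∈ [0, 1]`, with the same constants, and
the triangle inequality turns it into the lower bound `(1 - λ₁) / (1 + λ₂) * ‖x‖ ≤ ‖x + t • A x‖`,
uniform along the path `t ↦ I + t • A`. A uniform lower bound bounds the inverses of the
invertible members of the path uniformly, so by the Neumann series the set of `t` with `I + t • A`
invertible is closed as well as open in `[0, 1]`; it contains `0`, hence `1`. The norm estimates
are the triangle inequality for `x = (x + A x) - A x` and `x + A x`.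
-/

open Topology

namespace ContinuousLinearMap

variable {𝕜 E : Type*} [NontriviallyNormedField 𝕜] [NormedAddCommGroup E] [NormedSpace 𝕜 E]

theorem norm_inv_le_of_bounded_below (u : (E →L[𝕜] E)ˣ) {c : ℝ} (hc : 0 < c)
    (hu : ∀ x, c * ‖x‖ ≤ ‖(u : E →L[𝕜] E) x‖) : ‖(↑u⁻¹ : E →L[𝕜] E)‖ ≤ c⁻¹ := by
  refine opNorm_le_bound _ (inv_nonneg.2 hc.le) fun y => ?_
  have hy : (u : E →L[𝕜] E) ((↑u⁻¹ : E →L[𝕜] E) y) = y := by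
    rw [← mul_apply_eq_comp, Units.mul_inv, one_apply_eq_self]
  rw [inv_mul_eq_div, le_div_iff₀' hc]
  simpa only [hy] using hu ((↑u⁻¹ : E →L[𝕜] E) y)

variable [CompleteSpace E]

theorem isUnit_of_norm_sub_lt {S T : E →L[𝕜] E} (hS : IsUnit S) {c : ℝ} (hc : 0 < c)
    (hS_bdd : ∀ x, c * ‖x‖ ≤ ‖S x‖) (hTS : ‖T - S‖ < c) : IsUnit T := by
  nontriviality (E →L[𝕜] E)
  obtain ⟨u, rfl⟩ := hS
  have hc_le : c ≤ ‖(↑u⁻¹ : E →L[𝕜] E)‖⁻¹ :=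
    (le_inv_comm₀ hc (Units.norm_pos u⁻¹)).2 (norm_inv_le_of_bounded_below u hc hS_bdd)
  exact (u.ofNearby T (hTS.trans_le hc_le)).isUnit

/-- The method of continuity. -/
theorem isUnit_of_continuous_of_uniformly_bounded_below {T : ℝ → E →L[𝕜] E}
    (hT : Continuous T) {a b c : ℝ} (hc : 0 < c)
    (hT_bdd : ∀ t ∈ Icc a b, ∀ x, c * ‖x‖ ≤ ‖T t x‖) (ha : IsUnit (T a)) :
    ∀ t ∈ Icc a b, IsUnit (T t) := by
  set U := {t | IsUnit (T t)}
  have hU_open : IsOpen U := Units.isOpen.preimage hT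
  have hU_closed : IsClosed (U ∩ Icc a b) := by
    refine isClosed_of_closure_subset fun t ht => ?_
    have ht_Icc : t ∈ Icc a b :=
      isClosed_Icc.closure_subset (closure_mono inter_subset_right ht)
    have hnear : T ⁻¹' ball (T t) c ∈ 𝓝 t :=
      hT.continuousAt.preimage_mem_nhds (ball_mem_nhds _ hc)
    obtain ⟨s, hs_near, hs_unit, hs_Icc⟩ := mem_closure_iff_nhds.1 ht _ hnear
    refine ⟨isUnit_of_norm_sub_lt hs_unit hc (hT_bdd s hs_Icc) ?_, ht_Icc⟩
    rw [← dist_eq_norm, dist_comm]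
    exact hs_near
  exact hU_closed.Icc_subset_of_forall_mem_nhdsWithin ha fun t ht =>
    mem_nhdsWithin_of_mem_nhds (hU_open.mem_nhds ht.1)

end ContinuousLinearMap

section PerturbationBounds

variable {E : Type*} [SeminormedAddCommGroup E] {l1 l2 : ℝ} {x a : E}

theorem norm_smul_le_of_norm_le_add [NormedSpace ℝ E] (hl2 : 0 ≤ l2) (hl2' : l2 ≤ 1) {t : ℝ}
    (ht : t ∈ Icc 0 1) (h : ‖a‖ ≤ l1 * ‖x‖ + l2 * ‖x + a‖) :
    ‖t • a‖ ≤ l1 * ‖x‖ + l2 * ‖x + t • a‖ := by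
  have hsplit : ‖x + a‖ ≤ ‖x + t • a‖ + (1 - t) * ‖a‖ := by
    calc ‖x + a‖ = ‖(x + t • a) + (1 - t) • a‖ := by rw [sub_smul, one_smul]; abel_nf
      _ ≤ ‖x + t • a‖ + (1 - t) * ‖a‖ := by
        rw [← norm_smul_of_nonneg (sub_nonneg.2 ht.2)]; exact norm_add_le _ _
  rw [norm_smul_of_nonneg ht.1]
  -- `t ≤ 1 - l2 * (1 - t)` because `(1 - t) * (1 - l2) ≥ 0`
  nlinarith [mul_le_mul_of_nonneg_left hsplit hl2,
    mul_nonneg (mul_nonneg (sub_nonneg.2 ht.2) (sub_nonneg.2 hl2')) (norm_nonneg a)]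

theorem norm_add_bounds_of_norm_le_add (h : ‖a‖ ≤ l1 * ‖x‖ + l2 * ‖x + a‖) :
    (1 - l1) * ‖x‖ ≤ (1 + l2) * ‖x + a‖ ∧ (1 - l2) * ‖x + a‖ ≤ (1 + l1) * ‖x‖ := by
  have hx : ‖x‖ ≤ ‖x + a‖ + ‖a‖ := by simpa using norm_sub_le (x + a) a
  have hxa : ‖x + a‖ ≤ ‖x‖ + ‖a‖ := norm_add_le x a
  constructor <;> linarith

end PerturbationBounds

theorem stmt_16 {X : Type*} [NormedAddCommGroup X] [NormedSpace ℝ X] [CompleteSpace X]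
    (A : X →L[ℝ] X) (l1 l2 : ℝ)
    (hl1 : 0 ≤ l1) (hl1' : l1 < 1) (hl2 : 0 ≤ l2) (hl2' : l2 < 1)
    (h : ∀ x : X, ‖A x‖ ≤ l1 * ‖x‖ + l2 * ‖x + A x‖) :
    Function.Bijective (fun x : X => x + A x) ∧
    (∀ x : X, (1 - l1) / (1 + l2) * ‖x‖ ≤ ‖x + A x‖ ∧
      ‖x + A x‖ ≤ (1 + l1) / (1 - l2) * ‖x‖) ∧
    (∀ x y : X, y + A y = x →
      (1 - l2) / (1 + l1) * ‖x‖ ≤ ‖y‖ ∧ ‖y‖ ≤ (1 + l2) / (1 - l1) * ‖x‖) := by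
  have hbounds x := norm_add_bounds_of_norm_le_add (h x)
  have hunit : IsUnit (1 + A) := by
    have hfamily : ∀ t ∈ Icc (0 : ℝ) 1, ∀ x : X,
        (1 - l1) / (1 + l2) * ‖x‖ ≤ ‖(1 + t • A) x‖ := fun t ht x => by
      have := (norm_add_bounds_of_norm_le_add
        (norm_smul_le_of_norm_le_add hl2 hl2'.le ht (h x))).1
      rw [div_mul_eq_mul_div, div_le_iff₀ (by linarith)]
      simpa [mul_comm] using this
    simpa using ContinuousLinearMap.isUnit_of_continuous_of_uniformly_bounded_below
      (T := fun t : ℝ => 1 + t • A) (by fun_prop) (div_pos (by linarith) (by linarith))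
      hfamily (by simp) 1 ⟨zero_le_one, le_rfl⟩
  refine ⟨ContinuousLinearMap.isUnit_iff_bijective.1 hunit,
    fun x => ⟨?_, ?_⟩, fun x y hxy => ⟨?_, ?_⟩⟩
  · rw [div_mul_eq_mul_div, div_le_iff₀ (by linarith)]; linarith [(hbounds x).1]
  · rw [div_mul_eq_mul_div, le_div_iff₀ (by linarith)]; linarith [(hbounds x).2]
  · subst hxy; rw [div_mul_eq_mul_div, div_le_iff₀ (by linarith)]; linarith [(hbounds y).2]
  · subst hxy; rw [div_mul_eq_mul_div, le_div_iff₀ (by linarith)]; linarith [(hbounds y).1]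
end

section
/- Let X, Y be real Banach spaces, T ∈ B(X,Y) with a quasi-linear projector generalized inverse T^H : Y → X, and let δT ∈ B(X,Y) be such that T^H is quasi-additive on R(δT) and there exist λ₁, λ₂ ∈ [0,1) with ‖T^H(δT x)‖ ≤ λ₁‖x‖ + λ₂‖(I_X + T^H δT)x‖ for all x ∈ X. Then I_X + T^H δT is invertible in B(X,X), and the operator T̄^H := (I_X + T^H δT)^{-1} ∘ T^H satisfies ‖T̄^H − T^H‖ ≤ ‖T^H‖ · (2+λ₁)(1+λ₂)/((1−λ₁)(1−λ₂)), where the norm of a homogeneous map F is ‖F‖ = sup{‖F(y)‖ : ‖y‖ = 1}. -/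
open Metric Set

variable {X Y : Type*} [NormedAddCommGroup X] [NormedSpace ℝ X]
  [NormedAddCommGroup Y] [NormedSpace ℝ Y]

/-! The hypothesis bounds every operator `1 + t • A`, `0 ≤ t ≤ 1`, uniformly from below, so the
method of continuity carries invertibility from `1` to `B = 1 + A`. For `z = B⁻¹ w` we have
`B⁻¹ w - w = -A z`, and the hypothesis at `z` gives `(1 - λ₁) ‖A z‖ ≤ (λ₁ + λ₂) ‖w‖`. Taking
`w = T^H y` bounds `T̄^H - T^H` by `‖T^H‖ (λ₁ + λ₂) / (1 - λ₁)`, which is below the stated constant.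
-/

theorem Units.isUnit_add_of_norm_inv_mul_norm_lt_one {R : Type*} [NormedRing R]
    [HasSummableGeomSeries R] (u : Rˣ) {v : R} (h : ‖(↑u⁻¹ : R)‖ * ‖v‖ < 1) :
    IsUnit ((u : R) + v) := by
  have hsmall : ‖-((↑u⁻¹ : R) * v)‖ < 1 := by
    rw [norm_neg]; exact (norm_mul_le _ _).trans_lt h
  convert u.isUnit.mul (isUnit_one_sub_of_norm_lt_one hsmall) using 1
  simp [mul_add]

section MethodOfContinuity

variable {E : Type*} [NormedAddCommGroup E] [NormedSpace ℝ E]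

theorem ContinuousLinearMap.norm_units_inv_le {u : (E →L[ℝ] E)ˣ} {C : ℝ} (hC : 0 ≤ C)
    (h : ∀ x, ‖x‖ ≤ C * ‖(u : E →L[ℝ] E) x‖) : ‖(↑u⁻¹ : E →L[ℝ] E)‖ ≤ C :=
  ContinuousLinearMap.opNorm_le_bound _ hC fun y => by
    simpa [← mul_apply_eq_comp] using h ((↑u⁻¹ : E →L[ℝ] E) y)

theorem ContinuousLinearMap.isUnit_of_uniformly_bounded_below_on_segment [CompleteSpace E] {L₀ L₁ : E →L[ℝ] E}
    (h₀ : IsUnit L₀) {C : ℝ} (hC : 0 ≤ C)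
    (hbelow : ∀ t ∈ Icc (0 : ℝ) 1, ∀ x, ‖x‖ ≤ C * ‖(L₀ + t • (L₁ - L₀)) x‖) : IsUnit L₁ := by
  -- walk from `L₀` to `L₁` in `N` steps, each too small to leave the open set of units
  obtain ⟨N, hN⟩ := exists_nat_gt (C * ‖L₁ - L₀‖)
  have hN₀ : (0 : ℝ) < N := (by positivity : 0 ≤ C * ‖L₁ - L₀‖).trans_lt hN
  have hstep : ∀ k ≤ N, IsUnit (L₀ + ((k : ℝ) / N) • (L₁ - L₀)) := by
    intro k
    induction k with
    | zero => simpa using h₀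
    | succ k ih =>
      intro hk
      obtain ⟨u, hu⟩ := ih (Nat.le_of_succ_le hk)
      have hk' : (k : ℝ) / N ∈ Icc (0 : ℝ) 1 :=
        ⟨by positivity, (div_le_one hN₀).2 (by exact_mod_cast (Nat.le_of_succ_le hk))⟩
      have hinv : ‖(↑u⁻¹ : E →L[ℝ] E)‖ ≤ C :=
        norm_units_inv_le hC (hu ▸ hbelow _ hk')
      have hsmall : ‖(↑u⁻¹ : E →L[ℝ] E)‖ * ‖(N : ℝ)⁻¹ • (L₁ - L₀)‖ < 1 := by
        rw [norm_smul, norm_inv, Real.norm_natCast]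
        calc ‖(↑u⁻¹ : E →L[ℝ] E)‖ * ((N : ℝ)⁻¹ * ‖L₁ - L₀‖)
            ≤ C * ((N : ℝ)⁻¹ * ‖L₁ - L₀‖) := by gcongr
          _ = C * ‖L₁ - L₀‖ / N := by ring
          _ < 1 := (div_lt_one hN₀).2 hN
      convert u.isUnit_add_of_norm_inv_mul_norm_lt_one hsmall using 1
      rw [hu, add_assoc, ← add_smul]
      push_cast
      ring_nf
  simpa [hN₀.ne'] using hstep N le_rfl

end MethodOfContinuity

section Perturbation

variable {E : Type*} [NormedAddCommGroup E] [NormedSpace ℝ E] {A : E →L[ℝ] E} {l₁ l₂ : ℝ}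

theorem norm_le_mul_norm_add_smul_apply (hl₁ : 0 ≤ l₁) (hl₁' : l₁ < 1) (hl₂ : 0 ≤ l₂)
    (hl₂' : l₂ < 1) (hA : ∀ x, ‖A x‖ ≤ l₁ * ‖x‖ + l₂ * ‖x + A x‖) {t : ℝ} (ht : t ∈ Icc (0 : ℝ) 1)
    (x : E) : ‖x‖ ≤ (1 + l₂) / ((1 - l₁) * (1 - l₂)) * ‖x + t • A x‖ := by
  obtain ⟨ht₀, ht₁⟩ := ht
  set y := x + t • A x
  have hAx : ‖A x‖ ≤ l₁ * ‖x‖ + l₂ * (‖y‖ + (1 - t) * ‖A x‖) := by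
    have hsplit : x + A x = y + (1 - t) • A x := by simp only [y]; module
    have := norm_add_le y ((1 - t) • A x)
    rw [norm_smul, Real.norm_of_nonneg (by linarith), ← hsplit] at this
    nlinarith [hA x]
  have hx : ‖x‖ ≤ ‖y‖ + t * ‖A x‖ := by
    have := norm_sub_le y (t • A x)
    rwa [norm_smul, Real.norm_of_nonneg ht₀, add_sub_cancel_right] at this
  set d := 1 - l₂ * (1 - t)
  have hd : 0 ≤ d := by nlinarith
  -- eliminate `‖A x‖`: add `d * hx` and `t * hAx`
  have hxy : (d - t * l₁) * ‖x‖ ≤ (d + t * l₂) * ‖y‖ := by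
    nlinarith [mul_le_mul_of_nonneg_left hx hd, mul_le_mul_of_nonneg_left hAx ht₀]
  rw [div_mul_eq_mul_div, le_div_iff₀ (by nlinarith)]
  calc ‖x‖ * ((1 - l₁) * (1 - l₂)) ≤ (d - t * l₁) * ‖x‖ := by
        nlinarith [norm_nonneg x, mul_nonneg (mul_nonneg hl₁ (sub_nonneg.2 hl₂'.le))
          (sub_nonneg.2 ht₁), mul_nonneg (mul_nonneg ht₀ hl₂) (sub_nonneg.2 hl₁'.le)]
    _ ≤ (d + t * l₂) * ‖y‖ := hxy
    _ ≤ (1 + l₂) * ‖y‖ := mul_le_mul_of_nonneg_right (by nlinarith) (norm_nonneg y)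

theorem isUnit_one_add_of_norm_apply_le [CompleteSpace E] (hl₁ : 0 ≤ l₁) (hl₁' : l₁ < 1)
    (hl₂ : 0 ≤ l₂) (hl₂' : l₂ < 1) (hA : ∀ x, ‖A x‖ ≤ l₁ * ‖x‖ + l₂ * ‖x + A x‖) :
    IsUnit (1 + A) := by
  refine ContinuousLinearMap.isUnit_of_uniformly_bounded_below_on_segment isUnit_one
    (C := (1 + l₂) / ((1 - l₁) * (1 - l₂)))
    (div_nonneg (by linarith) (mul_nonneg (by linarith) (by linarith))) fun t ht x => ?_
  simpa using norm_le_mul_norm_add_smul_apply hl₁ hl₁' hl₂ hl₂' hA ht x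

theorem norm_inverse_one_add_apply_sub_le (hl₁ : 0 ≤ l₁) (hl₁' : l₁ < 1)
    (hA : ∀ x, ‖A x‖ ≤ l₁ * ‖x‖ + l₂ * ‖x + A x‖) (hU : IsUnit (1 + A)) (z : E) :
    ‖Ring.inverse (1 + A) z - z‖ ≤ (l₁ + l₂) / (1 - l₁) * ‖z‖ := by
  set v := Ring.inverse (1 + A) z
  have hv : v + A v = z := by
    have := DFunLike.congr_fun (Ring.mul_inverse_cancel _ hU) z
    rw [mul_apply_eq_comp] at this
    simpa using this
  have hsub : v - z = -A v := by rw [← hv]; abel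
  have hvnorm : ‖v‖ ≤ ‖z‖ + ‖A v‖ := by
    simpa [← hv] using norm_add_le (v + A v) (-A v)
  rw [hsub, norm_neg, div_mul_eq_mul_div, le_div_iff₀ (by linarith)]
  have hAv := hA v
  rw [hv] at hAv
  nlinarith [mul_le_mul_of_nonneg_left hvnorm hl₁]

end Perturbation

section HomogeneousNorm

variable {V W : Type*} [NormedAddCommGroup V] [NormedAddCommGroup W]

theorem hnorm_nonneg (F : V → W) : 0 ≤ hnorm F :=
  Real.sSup_nonneg (by rintro _ ⟨x, -, rfl⟩; positivity)

theorem hnorm_le_of_forall {F : V → W} {C : ℝ} (hC : 0 ≤ C)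
    (h : ∀ x : V, ‖x‖ = 1 → ‖F x‖ ≤ C) : hnorm F ≤ C :=
  Real.sSup_le (by rintro _ ⟨x, hx, rfl⟩; exact h x hx) hC

theorem norm_apply_le_hnorm {F : V → W} (hF : ∃ M, ∀ x, ‖F x‖ ≤ M * ‖x‖) {x : V}
    (hx : ‖x‖ = 1) : ‖F x‖ ≤ hnorm F := by
  obtain ⟨M, hM⟩ := hF
  refine le_csSup ⟨M, ?_⟩ ⟨x, hx, rfl⟩
  rintro _ ⟨x', hx', rfl⟩
  simpa [show ‖x'‖ = 1 from hx'] using hM x'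

end HomogeneousNorm

theorem stmt_17_general [CompleteSpace X] (T : X →L[ℝ] Y)
    (TH : Y → X) (hTH : QLPGenInv T TH)
    (A : X →L[ℝ] X)
    (l1 l2 : ℝ) (hl1 : 0 ≤ l1) (hl1' : l1 < 1) (hl2 : 0 ≤ l2) (hl2' : l2 < 1)
    (hbound : ∀ x : X, ‖A x‖ ≤ l1 * ‖x‖ + l2 * ‖x + A x‖) :
    IsUnit (1 + A) ∧
    hnorm (fun y => Ring.inverse (1 + A) (TH y) - TH y) ≤
      hnorm TH * ((2 + l1) * (1 + l2) / ((1 - l1) * (1 - l2))) := by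
  have hU := isUnit_one_add_of_norm_apply_le hl1 hl1' hl2 hl2' hbound
  have hc₀ : 0 ≤ (l1 + l2) / (1 - l1) := div_nonneg (by linarith) (by linarith)
  have hc : (l1 + l2) / (1 - l1) ≤ (2 + l1) * (1 + l2) / ((1 - l1) * (1 - l2)) := by
    rw [mul_comm (1 - l1), ← div_div]
    gcongr
    rw [le_div_iff₀ (by linarith)]
    nlinarith
  refine ⟨hU, hnorm_le_of_forall (mul_nonneg (hnorm_nonneg TH) (hc₀.trans hc)) fun y hy => ?_⟩
  calc ‖Ring.inverse (1 + A) (TH y) - TH y‖ ≤ (l1 + l2) / (1 - l1) * ‖TH y‖ :=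
        norm_inverse_one_add_apply_sub_le hl1 hl1' hbound hU (TH y)
    _ ≤ (l1 + l2) / (1 - l1) * hnorm TH :=
        mul_le_mul_of_nonneg_left (norm_apply_le_hnorm hTH.1.2 hy) hc₀
    _ ≤ hnorm TH * ((2 + l1) * (1 + l2) / ((1 - l1) * (1 - l2))) :=
        (mul_comm _ _).trans_le (mul_le_mul_of_nonneg_left hc (hnorm_nonneg TH))

theorem stmt_17 [CompleteSpace X] [CompleteSpace Y] (T δT : X →L[ℝ] Y)
    (TH : Y → X) (hTH : QLPGenInv T TH)
    (hq : QuasiAdditiveOn TH (Set.range ⇑δT))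
    (A : X →L[ℝ] X) (hA : ∀ x, A x = TH (δT x))
    (l1 l2 : ℝ) (hl1 : 0 ≤ l1) (hl1' : l1 < 1) (hl2 : 0 ≤ l2) (hl2' : l2 < 1)
    (hbound : ∀ x : X, ‖A x‖ ≤ l1 * ‖x‖ + l2 * ‖x + A x‖) :
    IsUnit (1 + A) ∧
    hnorm (fun y => Ring.inverse (1 + A) (TH y) - TH y) ≤
      hnorm TH * ((2 + l1) * (1 + l2) / ((1 - l1) * (1 - l2))) :=
  stmt_17_general T TH hTH A l1 l2 hl1 hl1' hl2 hl2' hbound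
end
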